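/- arXiv:2510.04904 — 3 statements merged into one kernel-verified Lean document; each statement's English description precedes it below -/
import Mathlib

section
/- The hyperinterpolant L_n f is the unique solution of the weighted discrete least squares problem: L_n f minimizes Σ_{j=1}^m w_j [f(x_j) − p(x_j)]² over all p ∈ P_n, provided the quadrature rule with positive weights is exact on P_{2n}. -/
open MeasureTheory Finset Real

/-- The hyperinterpolation operator: `L_n f = ∑_ℓ ⟨f, p_ℓ⟩_m p_ℓ`. -/
noncomputable def hyper {Ω : Type*} [TopologicalSpace Ω] {dn m : ℕ}
    (p : Fin dn → C(Ω, ℝ)) (xq : Fin m → Ω) (w : Fin m → ℝ) (f : C(Ω, ℝ)) : C(Ω, ℝ) :=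
  ∑ ℓ, (∑ j, w j * f (xq j) * p ℓ (xq j)) • p ℓ

/-- `L_n f` belongs to `P_n` and is the unique minimizer of the weighted discrete
least squares problem `min_{q ∈ P_n} ∑_j w_j (f(x_j) − q(x_j))²`. -/
theorem hyper_least_squares
    {Ω : Type*} [TopologicalSpace Ω] [CompactSpace Ω] [Nonempty Ω]
    [MeasurableSpace Ω] [BorelSpace Ω]
    (μ : Measure Ω) [IsFiniteMeasure μ]
    (Pn P2n : Submodule ℝ C(Ω, ℝ)) (hsub : Pn ≤ P2n)
    (hmul : ∀ g ∈ Pn, ∀ g' ∈ Pn, g * g' ∈ P2n)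
    {dn : ℕ} (p : Fin dn → C(Ω, ℝ)) (hp : ∀ ℓ, p ℓ ∈ Pn)
    (hspan : Pn = Submodule.span ℝ (Set.range p))
    (hortho : ∀ ℓ ℓ', ∫ x, p ℓ x * p ℓ' x ∂μ = if ℓ = ℓ' then (1 : ℝ) else 0)
    {m : ℕ} (xq : Fin m → Ω) (w : Fin m → ℝ) (hw : ∀ j, 0 < w j)
    (hexact : ∀ g ∈ P2n, ∑ j, w j * g (xq j) = ∫ x, g x ∂μ)
    (f : C(Ω, ℝ)) :
    hyper p xq w f ∈ Pn ∧
    (∀ q ∈ Pn, ∑ j, w j * (f (xq j) - hyper p xq w f (xq j)) ^ 2 ≤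
        ∑ j, w j * (f (xq j) - q (xq j)) ^ 2) ∧
    (∀ q ∈ Pn, (∀ r ∈ Pn, ∑ j, w j * (f (xq j) - q (xq j)) ^ 2 ≤
        ∑ j, w j * (f (xq j) - r (xq j)) ^ 2) → q = hyper p xq w f) := by
  classical
  set L := hyper p xq w f with hL
  set c : Fin dn → ℝ := fun ℓ => ∑ j, w j * f (xq j) * p ℓ (xq j) with hc
  have hLmem : L ∈ Pn := by
    rw [hL, hyper]
    exact Submodule.sum_mem _ fun ℓ _ => Submodule.smul_mem _ _ (hp ℓ)
  have hLapp : ∀ x, L x = ∑ ℓ, c ℓ * p ℓ x := by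
    intro x
    simp [hL, hyper, hc]
  -- discrete orthonormality
  have Dortho : ∀ ℓ ℓ', ∑ j, w j * (p ℓ (xq j) * p ℓ' (xq j))
      = if ℓ = ℓ' then (1 : ℝ) else 0 := by
    intro ℓ ℓ'
    have h := hexact (p ℓ * p ℓ') (hmul _ (hp ℓ) _ (hp ℓ'))
    simpa [ContinuousMap.mul_apply, hortho ℓ ℓ'] using h
  -- sum representation lemma
  have sumrep : ∀ (a : Fin dn → ℝ) (ℓ' : Fin dn),
      ∑ j, w j * (∑ ℓ, a ℓ * p ℓ (xq j)) * p ℓ' (xq j) = a ℓ' := by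
    intro a ℓ'
    calc ∑ j, w j * (∑ ℓ, a ℓ * p ℓ (xq j)) * p ℓ' (xq j)
        = ∑ j, ∑ ℓ, a ℓ * (w j * (p ℓ (xq j) * p ℓ' (xq j))) := by
          refine Finset.sum_congr rfl fun j _ => ?_
          rw [Finset.mul_sum, Finset.sum_mul]
          exact Finset.sum_congr rfl fun ℓ _ => by ring
      _ = ∑ ℓ, a ℓ * ∑ j, w j * (p ℓ (xq j) * p ℓ' (xq j)) := by
          rw [Finset.sum_comm]
          exact Finset.sum_congr rfl fun ℓ _ => by rw [Finset.mul_sum]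
      _ = a ℓ' := by simp [Dortho]
  -- orthogonality against basis
  have key : ∀ ℓ', ∑ j, w j * (f (xq j) - L (xq j)) * p ℓ' (xq j) = 0 := by
    intro ℓ'
    have h2 : ∑ j, w j * L (xq j) * p ℓ' (xq j) = c ℓ' := by
      have := sumrep c ℓ'
      rw [← this]
      exact Finset.sum_congr rfl fun j _ => by rw [hLapp]
    have : ∑ j, w j * (f (xq j) - L (xq j)) * p ℓ' (xq j)
        = ∑ j, w j * f (xq j) * p ℓ' (xq j) - ∑ j, w j * L (xq j) * p ℓ' (xq j) := by
      rw [← Finset.sum_sub_distrib]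
      exact Finset.sum_congr rfl fun j _ => by ring
    rw [this, h2, hc]
    ring
  -- orthogonality against all of Pn
  have ortho : ∀ g ∈ Pn, ∑ j, w j * (f (xq j) - L (xq j)) * g (xq j) = 0 := by
    intro g hg
    rw [hspan] at hg
    induction hg using Submodule.span_induction with
    | mem x hx => obtain ⟨ℓ', rfl⟩ := hx; exact key ℓ'
    | zero => simp
    | add x y hx hy ihx ihy =>
        have : ∑ j, w j * (f (xq j) - L (xq j)) * (x + y) (xq j)
            = (∑ j, w j * (f (xq j) - L (xq j)) * x (xq j))
              + ∑ j, w j * (f (xq j) - L (xq j)) * y (xq j) := by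
          rw [← Finset.sum_add_distrib]
          exact Finset.sum_congr rfl fun j _ => by
            simp [ContinuousMap.add_apply]; ring
        rw [this, ihx, ihy, add_zero]
    | smul a x hx ih =>
        have : ∑ j, w j * (f (xq j) - L (xq j)) * (a • x) (xq j)
            = a * ∑ j, w j * (f (xq j) - L (xq j)) * x (xq j) := by
          rw [Finset.mul_sum]
          exact Finset.sum_congr rfl fun j _ => by
            simp [ContinuousMap.smul_apply, smul_eq_mul]; ring
        rw [this, ih, mul_zero]
  -- decomposition
  have decomp : ∀ q ∈ Pn, ∑ j, w j * (f (xq j) - q (xq j)) ^ 2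
      = ∑ j, w j * (f (xq j) - L (xq j)) ^ 2 + ∑ j, w j * (L (xq j) - q (xq j)) ^ 2 := by
    intro q hq
    have hg : L - q ∈ Pn := Submodule.sub_mem _ hLmem hq
    have h0 := ortho _ hg
    have hterm : ∀ j ∈ Finset.univ, w j * (f (xq j) - q (xq j)) ^ 2
        = (w j * (f (xq j) - L (xq j)) ^ 2 + w j * (L (xq j) - q (xq j)) ^ 2)
          + 2 * (w j * (f (xq j) - L (xq j)) * (L - q) (xq j)) := by
      intro j _
      simp only [ContinuousMap.sub_apply]
      ring
    rw [Finset.sum_congr rfl hterm, Finset.sum_add_distrib, Finset.sum_add_distrib,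
      ← Finset.mul_sum, h0, mul_zero, add_zero]
  have nonneg : ∀ (q : C(Ω, ℝ)), 0 ≤ ∑ j, w j * (L (xq j) - q (xq j)) ^ 2 :=
    fun q => Finset.sum_nonneg fun j _ => mul_nonneg (hw j).le (sq_nonneg _)
  refine ⟨hLmem, fun q hq => ?_, fun q hq hmin => ?_⟩
  · rw [decomp q hq]
    linarith [nonneg q]
  · -- uniqueness
    have h1 := hmin L hLmem
    have h2 := decomp q hq
    have h3 : ∑ j, w j * (L (xq j) - q (xq j)) ^ 2 = 0 := le_antisymm (by linarith) (nonneg q)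
    have h4 : ∀ j, L (xq j) - q (xq j) = 0 := by
      intro j
      have := (Finset.sum_eq_zero_iff_of_nonneg
        (fun j _ => mul_nonneg (hw j).le (sq_nonneg _))).mp h3 j (Finset.mem_univ j)
      have h5 : (L (xq j) - q (xq j)) ^ 2 = 0 := by
        rcases mul_eq_zero.mp this with h | h
        · exact absurd h (ne_of_gt (hw j))
        · exact h
      exact pow_eq_zero_iff (by norm_num) |>.mp h5
    -- show L - q = 0
    have hg : L - q ∈ Pn := Submodule.sub_mem _ hLmem hq
    obtain ⟨a, ha⟩ := (Submodule.mem_span_range_iff_exists_fun ℝ).mp (hspan ▸ hg)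
    have hzero : ∀ ℓ', a ℓ' = 0 := by
      intro ℓ'
      have := sumrep a ℓ'
      rw [← this]
      refine Finset.sum_eq_zero fun j _ => ?_
      have hx : ∑ ℓ, a ℓ * p ℓ (xq j) = 0 := by
        have h6 : (∑ ℓ, a ℓ • p ℓ : C(Ω, ℝ)) (xq j) = (L - q) (xq j) := by rw [ha]
        simpa [ContinuousMap.sub_apply, h4 j, sub_eq_zero] using h6
      rw [hx, mul_zero, zero_mul]
    have : L - q = 0 := by
      rw [← ha]
      exact Finset.sum_eq_zero fun ℓ _ => by rw [hzero ℓ, zero_smul]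
    have := sub_eq_zero.mp this
    exact this.symm
end

section
/- Suppose the positive-weight m-point quadrature rule is exact on P_{2n} and m = dim P_n (a minimal rule). Then hyperinterpolation interpolates: L_n f(x_j) = f(x_j) for all j = 1,...,m and every continuous f. Conversely, if L_n f(x_j) = f(x_j) for all j and all f ∈ C(Ω), then m = dim P_n. -/
open MeasureTheory Finset Real
open Matrix

private lemma aux_le_of_mul_eq_one {m n : ℕ} (A : Matrix (Fin m) (Fin n) ℝ)
    (h : Aᵀ * A = 1) : n ≤ m := by
  have hinj : Function.Injective A.mulVecLin := by
    intro x y hxy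
    have h2 : (Aᵀ * A).mulVec x = (Aᵀ * A).mulVec y := by
      rw [← Matrix.mulVec_mulVec, ← Matrix.mulVec_mulVec]
      simp only [Matrix.mulVecLin_apply] at hxy
      rw [hxy]
    simpa [h] using h2
  simpa using LinearMap.finrank_le_finrank_of_injective hinj

/-- Hyperinterpolation interpolates at the quadrature points for every continuous `f`
if and only if the quadrature rule is minimal, i.e. `m = dim P_n = d_n`. -/
theorem hyper_interpolation_iff_minimal
    {Ω : Type*} [TopologicalSpace Ω] [CompactSpace Ω] [T2Space Ω] [MeasurableSpace Ω] [BorelSpace Ω]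
    (μ : Measure Ω) [IsFiniteMeasure μ]
    (Pn P2n : Submodule ℝ C(Ω, ℝ)) (hsub : Pn ≤ P2n)
    (hmul : ∀ g ∈ Pn, ∀ g' ∈ Pn, g * g' ∈ P2n)
    {dn : ℕ} (p : Fin dn → C(Ω, ℝ)) (hp : ∀ ℓ, p ℓ ∈ Pn)
    (hspan : Pn = Submodule.span ℝ (Set.range p))
    (hindep : LinearIndependent ℝ p)
    (hortho : ∀ ℓ ℓ', ∫ x, p ℓ x * p ℓ' x ∂μ = if ℓ = ℓ' then (1 : ℝ) else 0)
    {m : ℕ} (xq : Fin m → Ω) (hxq : Function.Injective xq)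
    (w : Fin m → ℝ) (hw : ∀ j, 0 < w j)
    (hexact : ∀ g ∈ P2n, ∑ j, w j * g (xq j) = ∫ x, g x ∂μ) :
    (m = dn → ∀ f : C(Ω, ℝ), ∀ j, hyper p xq w f (xq j) = f (xq j)) ∧
    ((∀ f : C(Ω, ℝ), ∀ j, hyper p xq w f (xq j) = f (xq j)) → m = dn) := by
  classical
  -- the matrix B j ℓ = √(w j) * p ℓ (xq j)
  set B : Matrix (Fin m) (Fin dn) ℝ :=
    Matrix.of (fun j ℓ => Real.sqrt (w j) * p ℓ (xq j)) with hB
  -- B ᵀ * B = 1, from exactness of the quadrature rule and orthonormality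
  have hBtB : Bᵀ * B = 1 := by
    ext ℓ ℓ'
    rw [Matrix.mul_apply]
    simp only [Matrix.transpose_apply, hB, Matrix.of_apply, Matrix.one_apply]
    have key : ∀ j : Fin m, Real.sqrt (w j) * p ℓ (xq j) * (Real.sqrt (w j) * p ℓ' (xq j))
        = w j * ((p ℓ * p ℓ') (xq j)) := by
      intro j
      calc Real.sqrt (w j) * p ℓ (xq j) * (Real.sqrt (w j) * p ℓ' (xq j))
          = Real.sqrt (w j) * Real.sqrt (w j) * (p ℓ (xq j) * p ℓ' (xq j)) := by ring
        _ = w j * ((p ℓ * p ℓ') (xq j)) := by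
            rw [Real.mul_self_sqrt (hw j).le, ContinuousMap.mul_apply]
    rw [Finset.sum_congr rfl (fun j _ => key j),
      hexact _ (hmul _ (hp ℓ) _ (hp ℓ'))]
    simpa using hortho ℓ ℓ'
  -- the key combinatorial identity, in both directions
  constructor
  · -- minimal ⇒ interpolation
    intro hm f k
    subst hm
    have hBBt : B * Bᵀ = 1 := mul_eq_one_comm.mp hBtB
    have hWS : ∀ j k : Fin m, w j * (∑ ℓ, p ℓ (xq j) * p ℓ (xq k))
        = if j = k then 1 else 0 := by
      intro j k
      have h := congrFun (congrFun hBBt j) k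
      rw [Matrix.mul_apply] at h
      simp only [Matrix.transpose_apply, hB, Matrix.of_apply, Matrix.one_apply] at h
      have hsum : ∑ ℓ, Real.sqrt (w j) * p ℓ (xq j) * (Real.sqrt (w k) * p ℓ (xq k))
          = Real.sqrt (w j) * Real.sqrt (w k) * ∑ ℓ, p ℓ (xq j) * p ℓ (xq k) := by
        rw [Finset.mul_sum]; exact Finset.sum_congr rfl fun _ _ => by ring
      rw [hsum] at h
      by_cases hjk : j = k
      · subst hjk
        rw [if_pos rfl] at h ⊢
        rwa [Real.mul_self_sqrt (hw j).le] at h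
      · rw [if_neg hjk] at h ⊢
        have hne : Real.sqrt (w j) * Real.sqrt (w k) ≠ 0 :=
          mul_ne_zero (ne_of_gt (Real.sqrt_pos.mpr (hw j)))
            (ne_of_gt (Real.sqrt_pos.mpr (hw k)))
        have : ∑ ℓ, p ℓ (xq j) * p ℓ (xq k) = 0 := by
          rcases mul_eq_zero.mp h with h' | h'
          · exact absurd h' hne
          · exact h'
        rw [this, mul_zero]
    simp only [hyper, ContinuousMap.sum_apply, ContinuousMap.smul_apply, smul_eq_mul]
    calc ∑ ℓ, (∑ j, w j * f (xq j) * p ℓ (xq j)) * p ℓ (xq k)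
        = ∑ j, f (xq j) * (w j * ∑ ℓ, p ℓ (xq j) * p ℓ (xq k)) := by
          simp only [Finset.sum_mul]
          rw [Finset.sum_comm]
          refine Finset.sum_congr rfl fun j _ => ?_
          rw [Finset.mul_sum, Finset.mul_sum]
          exact Finset.sum_congr rfl fun ℓ _ => by ring
      _ = f (xq k) := by
          simp only [hWS, mul_ite, mul_one, mul_zero]
          simp
  · -- interpolation ⇒ minimal
    intro hint
    have hWS : ∀ k j : Fin m, w k * (∑ ℓ, p ℓ (xq k) * p ℓ (xq j))
        = if k = j then 1 else 0 := by
      intro k j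
      obtain ⟨f, hf0, hf1, -⟩ := exists_continuous_zero_one_of_isClosed
        (s := xq '' {i | i ≠ k}) (t := {xq k})
        ((Set.toFinite _).isClosed) isClosed_singleton
        (by
          rw [Set.disjoint_left]
          rintro x ⟨i, hik, rfl⟩ hx
          exact hik (hxq (Set.mem_singleton_iff.mp hx)))
      have hfk : f (xq k) = 1 := hf1 rfl
      have hfi : ∀ i, i ≠ k → f (xq i) = 0 := fun i hi => hf0 ⟨i, hi, rfl⟩
      have h := hint f j
      simp only [hyper, ContinuousMap.sum_apply, ContinuousMap.smul_apply, smul_eq_mul] at h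
      have hin : ∀ ℓ, ∑ i, w i * f (xq i) * p ℓ (xq i) = w k * p ℓ (xq k) := by
        intro ℓ
        rw [Finset.sum_eq_single k]
        · rw [hfk]; ring
        · intro i _ hik; rw [hfi i hik]; ring
        · intro hk; exact absurd (Finset.mem_univ k) hk
      simp only [hin] at h
      have hrhs : f (xq j) = if k = j then 1 else 0 := by
        by_cases hkj : k = j
        · subst hkj; simp [hfk]
        · simp [hfi j (Ne.symm hkj), hkj]
      rw [hrhs] at h
      rw [← h, Finset.mul_sum]
      exact Finset.sum_congr rfl fun _ _ => by ring
    have hBBt : B * Bᵀ = 1 := by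
      ext j k
      rw [Matrix.mul_apply]
      simp only [Matrix.transpose_apply, hB, Matrix.of_apply, Matrix.one_apply]
      have hsum : ∑ ℓ, Real.sqrt (w j) * p ℓ (xq j) * (Real.sqrt (w k) * p ℓ (xq k))
          = Real.sqrt (w j) * Real.sqrt (w k) * ∑ ℓ, p ℓ (xq j) * p ℓ (xq k) := by
        rw [Finset.mul_sum]; exact Finset.sum_congr rfl fun _ _ => by ring
      rw [hsum]
      by_cases hjk : j = k
      · subst hjk
        rw [if_pos rfl, Real.mul_self_sqrt (hw j).le]
        exact (hWS j j).trans (if_pos rfl)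
      · rw [if_neg hjk]
        have h0 := (hWS j k).trans (if_neg hjk)
        have : ∑ ℓ, p ℓ (xq j) * p ℓ (xq k) = 0 := by
          rcases mul_eq_zero.mp h0 with h' | h'
          · exact absurd h' (ne_of_gt (hw j))
          · exact h'
        rw [this, mul_zero]
    have h1 : dn ≤ m := aux_le_of_mul_eq_one B hBtB
    have h2 : m ≤ dn := aux_le_of_mul_eq_one Bᵀ (by rwa [Matrix.transpose_transpose])
    omega
end

section
/- Under quadrature exactness of degree 2n with positive weights, hyperinterpolation coincides with the orthogonal projection on polynomial inputs and satisfies the Pythagorean-type identity ‖L_n f − f‖²_{L²,m} = ‖f‖²_{L²,m} − Σ_{ℓ=1}^{d_n} ⟨f, p_ℓ⟩_m², where ‖g‖²_{L²,m} = Σ_j w_j g(x_j)², i.e., L_n f is the discrete-inner-product orthogonal projection of f onto P_n. -/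
open MeasureTheory Finset Real

/-- Under quadrature exactness of degree `2n`, hyperinterpolation coincides with the
orthogonal projection on polynomial inputs (`L_n g = g` for `g ∈ P_n`), it is the
discrete-inner-product orthogonal projection onto `P_n`
(`⟨f − L_n f, q⟩_m = 0` for all `q ∈ P_n`), and the Pythagorean-type identity
`‖L_n f − f‖²_{L²,m} = ‖f‖²_{L²,m} − ∑_ℓ ⟨f, p_ℓ⟩_m²` holds. -/
theorem hyper_discrete_orthogonal_projection
    {Ω : Type*} [TopologicalSpace Ω] [CompactSpace Ω] [MeasurableSpace Ω] [BorelSpace Ω]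
    (μ : Measure Ω) [IsFiniteMeasure μ]
    (Pn P2n : Submodule ℝ C(Ω, ℝ)) (hsub : Pn ≤ P2n)
    (hmul : ∀ g ∈ Pn, ∀ g' ∈ Pn, g * g' ∈ P2n)
    {dn : ℕ} (p : Fin dn → C(Ω, ℝ)) (hp : ∀ ℓ, p ℓ ∈ Pn)
    (hspan : Pn = Submodule.span ℝ (Set.range p))
    (hortho : ∀ ℓ ℓ', ∫ x, p ℓ x * p ℓ' x ∂μ = if ℓ = ℓ' then (1 : ℝ) else 0)
    {m : ℕ} (xq : Fin m → Ω) (w : Fin m → ℝ) (hw : ∀ j, 0 < w j)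
    (hexact : ∀ g ∈ P2n, ∑ j, w j * g (xq j) = ∫ x, g x ∂μ)
    (f : C(Ω, ℝ)) :
    (∀ g ∈ Pn, hyper p xq w g = g) ∧
    (∀ q ∈ Pn, ∑ j, w j * (f (xq j) - hyper p xq w f (xq j)) * q (xq j) = 0) ∧
    (∑ j, w j * (hyper p xq w f (xq j) - f (xq j)) ^ 2 =
      ∑ j, w j * (f (xq j)) ^ 2 - ∑ ℓ, (∑ j, w j * f (xq j) * p ℓ (xq j)) ^ 2) := by
  -- discrete orthonormality
  have S : ∀ ℓ ℓ', ∑ j, w j * (p ℓ (xq j) * p ℓ' (xq j)) = if ℓ = ℓ' then (1:ℝ) else 0 := by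
    intro ℓ ℓ'
    have h := hexact (p ℓ * p ℓ') (hmul _ (hp ℓ) _ (hp ℓ'))
    simpa [ContinuousMap.mul_apply, hortho ℓ ℓ'] using h
  set c : Fin dn → ℝ := fun ℓ => ∑ j, w j * f (xq j) * p ℓ (xq j) with hc
  have happ : ∀ (g : C(Ω, ℝ)) (x : Ω),
      hyper p xq w g x = ∑ ℓ, (∑ j, w j * g (xq j) * p ℓ (xq j)) * p ℓ x := by
    intro g x; simp [hyper]
  -- hyper applied to generators
  have hgen : ∀ k, hyper p xq w (p k) = p k := by
    intro k
    unfold hyper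
    have : ∀ ℓ, (∑ j, w j * (p k) (xq j) * p ℓ (xq j)) = if k = ℓ then (1:ℝ) else 0 := by
      intro ℓ; rw [← S k ℓ]; simp [mul_assoc]
    simp only [this]
    rw [Finset.sum_eq_single k]
    · simp
    · intro b _ hb; simp [Ne.symm hb]
    · simp
  -- part 1
  have part1 : ∀ g ∈ Pn, hyper p xq w g = g := by
    intro g hg
    rw [hspan] at hg
    induction hg using Submodule.span_induction with
    | mem x hx => obtain ⟨k, rfl⟩ := hx; exact hgen k
    | zero => simp [hyper]
    | add x y _ _ hx hy =>
        have : hyper p xq w (x + y) = hyper p xq w x + hyper p xq w y := by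
          unfold hyper
          rw [← Finset.sum_add_distrib]
          refine Finset.sum_congr rfl fun ℓ _ => ?_
          rw [← add_smul, ← Finset.sum_add_distrib]
          congr 1
          refine Finset.sum_congr rfl fun j _ => ?_
          simp [mul_add, add_mul]
        rw [this, hx, hy]
    | smul a x _ hx =>
        have : hyper p xq w (a • x) = a • hyper p xq w x := by
          unfold hyper
          rw [Finset.smul_sum]
          refine Finset.sum_congr rfl fun ℓ _ => ?_
          rw [smul_smul, Finset.mul_sum]
          congr 1
          refine Finset.sum_congr rfl fun j _ => ?_
          simp; ring
        rw [this, hx]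
  -- key: discrete inner product of f with p k equals that of hyper f with p k
  have hkey : ∀ k, ∑ j, w j * (hyper p xq w f) (xq j) * p k (xq j) = c k := by
    intro k
    calc ∑ j, w j * (hyper p xq w f) (xq j) * p k (xq j)
        = ∑ j, ∑ ℓ, c ℓ * (w j * (p ℓ (xq j) * p k (xq j))) := by
          refine Finset.sum_congr rfl fun j _ => ?_
          rw [happ, Finset.mul_sum, Finset.sum_mul]
          refine Finset.sum_congr rfl fun ℓ _ => ?_
          simp only [hc]; ring
      _ = ∑ ℓ, c ℓ * ∑ j, w j * (p ℓ (xq j) * p k (xq j)) := by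
          rw [Finset.sum_comm]
          exact Finset.sum_congr rfl fun ℓ _ => by rw [Finset.mul_sum]
      _ = c k := by
          simp only [S]
          rw [Finset.sum_eq_single k] <;> simp +contextual
  -- part 2 for generators, then span induction
  have part2 : ∀ q ∈ Pn, ∑ j, w j * (f (xq j) - hyper p xq w f (xq j)) * q (xq j) = 0 := by
    intro q hq
    rw [hspan] at hq
    induction hq using Submodule.span_induction with
    | mem x hx =>
        obtain ⟨k, rfl⟩ := hx
        have := hkey k
        have h2 : ∑ j, w j * (f (xq j) - hyper p xq w f (xq j)) * p k (xq j)
            = (∑ j, w j * f (xq j) * p k (xq j))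
              - ∑ j, w j * (hyper p xq w f) (xq j) * p k (xq j) := by
          rw [← Finset.sum_sub_distrib]
          refine Finset.sum_congr rfl fun j _ => by ring
        rw [h2, this, hc]; ring
    | zero => simp
    | add x y _ _ hx hy =>
        have h : ∑ j, w j * (f (xq j) - hyper p xq w f (xq j)) * (x + y) (xq j)
            = (∑ j, w j * (f (xq j) - hyper p xq w f (xq j)) * x (xq j))
              + ∑ j, w j * (f (xq j) - hyper p xq w f (xq j)) * y (xq j) := by
          rw [← Finset.sum_add_distrib]
          exact Finset.sum_congr rfl fun j _ => by simp [mul_add]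
        rw [h, hx, hy, add_zero]
    | smul a x _ hx =>
        have : ∑ j, w j * (f (xq j) - hyper p xq w f (xq j)) * (a • x) (xq j)
            = a * ∑ j, w j * (f (xq j) - hyper p xq w f (xq j)) * x (xq j) := by
          rw [Finset.mul_sum]
          exact Finset.sum_congr rfl fun j _ => by simp; ring
        rw [this, hx, mul_zero]
  refine ⟨part1, part2, ?_⟩
  -- part 3
  have hLf : ∀ j, (hyper p xq w f) (xq j) = ∑ ℓ, c ℓ * p ℓ (xq j) := fun j => happ f (xq j)
  have hfL : ∑ j, w j * f (xq j) * (hyper p xq w f) (xq j) = ∑ ℓ, c ℓ ^ 2 := by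
    calc ∑ j, w j * f (xq j) * (hyper p xq w f) (xq j)
        = ∑ j, ∑ ℓ, c ℓ * (w j * f (xq j) * p ℓ (xq j)) := by
          refine Finset.sum_congr rfl fun j _ => ?_
          rw [hLf, Finset.mul_sum]
          exact Finset.sum_congr rfl fun ℓ _ => by ring
      _ = ∑ ℓ, c ℓ * ∑ j, w j * f (xq j) * p ℓ (xq j) := by
          rw [Finset.sum_comm]
          exact Finset.sum_congr rfl fun ℓ _ => by rw [Finset.mul_sum]
      _ = ∑ ℓ, c ℓ ^ 2 := Finset.sum_congr rfl fun ℓ _ => by simp only [hc]; ring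
  have hLL : ∑ j, w j * (hyper p xq w f) (xq j) ^ 2 = ∑ ℓ, c ℓ ^ 2 := by
    calc ∑ j, w j * (hyper p xq w f) (xq j) ^ 2
        = ∑ j, ∑ ℓ, c ℓ * (w j * (hyper p xq w f) (xq j) * p ℓ (xq j)) := by
          refine Finset.sum_congr rfl fun j _ => ?_
          rw [sq]
          nth_rewrite 2 [hLf j]
          rw [Finset.mul_sum, Finset.mul_sum]
          exact Finset.sum_congr rfl fun ℓ _ => by ring
      _ = ∑ ℓ, c ℓ * ∑ j, w j * (hyper p xq w f) (xq j) * p ℓ (xq j) := by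
          rw [Finset.sum_comm]
          exact Finset.sum_congr rfl fun ℓ _ => by rw [Finset.mul_sum]
      _ = ∑ ℓ, c ℓ ^ 2 := Finset.sum_congr rfl fun ℓ _ => by rw [hkey]; ring
  have expand : ∀ j, w j * (hyper p xq w f (xq j) - f (xq j)) ^ 2
      = w j * f (xq j) ^ 2 - 2 * (w j * f (xq j) * (hyper p xq w f) (xq j))
        + w j * (hyper p xq w f) (xq j) ^ 2 := fun j => by ring
  calc ∑ j, w j * (hyper p xq w f (xq j) - f (xq j)) ^ 2
      = (∑ j, w j * f (xq j) ^ 2) - 2 * (∑ j, w j * f (xq j) * (hyper p xq w f) (xq j))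
        + ∑ j, w j * (hyper p xq w f) (xq j) ^ 2 := by
        simp only [expand, Finset.sum_add_distrib, Finset.sum_sub_distrib, Finset.mul_sum]
    _ = (∑ j, w j * f (xq j) ^ 2) - ∑ ℓ, c ℓ ^ 2 := by rw [hfL, hLL]; ring
    _ = _ := by rw [hc]
end
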